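/- arXiv:cs/0603103 — 5 statements merged into one kernel-verified Lean document; each statement's English description precedes it below -/
import Mathlib

section
/- Let R_max > 0, let f : ℝ → ℝ be concave and antitone on [0, R_max] with f nonnegative there, let 0 ≤ d₁, 0 ≤ d₂, and let S = {(R₁, R₂) ∈ ℝ² : d₁ ≤ R₁ ≤ R_max and d₂ ≤ R₂ ≤ f(R₁)}. Assume there exists (r₁, r₂) ∈ S with d₁ < r₁ and d₂ < r₂. Then any point (R₁*, R₂*) ∈ S maximizing the Nash product (R₁ − d₁)(R₂ − d₂) over S satisfies d₁ < R₁*, d₂ < R₂*, and R₂* = f(R₁*); in particular the maximizer is Pareto optimal, i.e., on the upper boundary of the rate region. -/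
/-- Theorem 1 (Pareto optimality): any maximizer of the Nash product over the
rate region `S = {(R₁,R₂) : d₁ ≤ R₁ ≤ R_max, d₂ ≤ R₂ ≤ f R₁}` strictly dominates
the disagreement point and lies on the upper boundary `R₂ = f R₁`. -/
theorem nash_bargaining_pareto
    (Rmax : ℝ) (hRmax : 0 < Rmax) (f : ℝ → ℝ)
    (hconc : ConcaveOn ℝ (Set.Icc 0 Rmax) f)
    (hanti : AntitoneOn f (Set.Icc 0 Rmax))
    (hfnn : ∀ x ∈ Set.Icc (0 : ℝ) Rmax, 0 ≤ f x)
    (d₁ d₂ : ℝ) (hd₁ : 0 ≤ d₁) (hd₂ : 0 ≤ d₂)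
    (S : Set (ℝ × ℝ))
    (hS : S = {p : ℝ × ℝ | d₁ ≤ p.1 ∧ p.1 ≤ Rmax ∧ d₂ ≤ p.2 ∧ p.2 ≤ f p.1})
    (r : ℝ × ℝ) (hr : r ∈ S) (hr₁ : d₁ < r.1) (hr₂ : d₂ < r.2)
    (p : ℝ × ℝ) (hp : p ∈ S)
    (hmax : ∀ q ∈ S, (q.1 - d₁) * (q.2 - d₂) ≤ (p.1 - d₁) * (p.2 - d₂)) :
    d₁ < p.1 ∧ d₂ < p.2 ∧ p.2 = f p.1 := by
  subst hS
  obtain ⟨hp1, hp2, hp3, hp4⟩ := hp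
  have hrpos : 0 < (r.1 - d₁) * (r.2 - d₂) :=
    mul_pos (by linarith) (by linarith)
  have hppos : 0 < (p.1 - d₁) * (p.2 - d₂) :=
    lt_of_lt_of_le hrpos (hmax r hr)
  have h1 : d₁ < p.1 := by
    by_contra h
    push_neg at h
    have : p.1 - d₁ ≤ 0 := by linarith
    nlinarith
  have h2 : d₂ < p.2 := by
    by_contra h
    push_neg at h
    have : p.2 - d₂ ≤ 0 := by linarith
    nlinarith
  refine ⟨h1, h2, ?_⟩
  by_contra h
  have hlt : p.2 < f p.1 := lt_of_le_of_ne hp4 h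
  have := hmax (p.1, f p.1) ⟨hp1, hp2, by linarith, le_refl _⟩
  simp only at this
  nlinarith
end

section
/- For all real x > 0 and y > 0, there exists a unique ρ with 0 < ρ < 1 such that (1 + x/ρ)^ρ = 1 + x/(1 + y). -/
/-!
Taking logarithms, the equation becomes `g ρ = log (1 + x / (1 + y))` with
`g t = t * log (1 + x / t) = t * log (t + x) - t * log t`. The right-hand form is continuous on
`[0, 1]` with value `0` at `0` and `log (1 + x)` at `1`, which brackets the target value, so the
intermediate value theorem gives a solution in `(0, 1)`. Uniqueness: `g t` is `x` times the slope
of the secant of `log` between `1` and `1 + x / t`, which increases with `t` by strict concavity.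
-/

open Real Set

lemma mul_log_one_add_div_eq {x t : ℝ} (ht : t ≠ 0) (htx : t + x ≠ 0) :
    t * log (1 + x / t) = t * log (t + x) - t * log t := by
  rw [one_add_div ht, log_div htx ht, mul_sub]

lemma mul_log_one_add_div_eq_mul_slope {x t : ℝ} (hx : x ≠ 0) (ht : t ≠ 0) :
    t * log (1 + x / t) = x * ((log (1 + x / t) - log 1) / (1 + x / t - 1)) := by
  rw [log_one, sub_zero, add_sub_cancel_left]
  field_simp

lemma strictMonoOn_mul_log_one_add_div {x : ℝ} (hx : 0 < x) :
    StrictMonoOn (fun t ↦ t * log (1 + x / t)) (Ioi 0) := by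
  intro s (hs : 0 < s) t (ht : 0 < t) hst
  have hxs : 0 < x / s := div_pos hx hs
  have hxt : 0 < x / t := div_pos hx ht
  have hslope := strictConcaveOn_log_Ioi.secant_strict_mono (a := 1) (mem_Ioi.2 one_pos)
    (x := 1 + x / t) (y := 1 + x / s) (mem_Ioi.2 (by positivity)) (mem_Ioi.2 (by positivity))
    (by linarith) (by linarith) (by gcongr)
  dsimp only
  rw [mul_log_one_add_div_eq_mul_slope hx.ne' hs.ne',
    mul_log_one_add_div_eq_mul_slope hx.ne' ht.ne']
  exact mul_lt_mul_of_pos_left hslope hx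

lemma exists_mem_Ioo_mul_log_one_add_div_eq {x c : ℝ} (hx : 0 < x) (hc₀ : 0 < c)
    (hc₁ : c < log (1 + x)) : ∃ ρ ∈ Ioo 0 1, ρ * log (1 + x / ρ) = c := by
  have hcont : ContinuousOn (fun t ↦ t * log (t + x) - t * log t) (Icc 0 1) := by
    refine (continuousOn_id.mul (ContinuousOn.log (by fun_prop) ?_)).sub
      continuous_mul_log.continuousOn
    intro t ⟨ht, _⟩
    positivity
  obtain ⟨ρ, hρ, hρc⟩ := intermediate_value_Ioo zero_le_one hcont
    ⟨by simpa using hc₀, by simpa [add_comm] using hc₁⟩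
  refine ⟨ρ, hρ, ?_⟩
  rwa [mul_log_one_add_div_eq hρ.1.ne' (by linarith [hρ.1])]

/-- Claim 1: for all `x, y > 0` there is a unique `ρ ∈ (0,1)` with
`(1 + x/ρ)^ρ = 1 + x/(1+y)`. -/
theorem exists_unique_rho (x y : ℝ) (hx : 0 < x) (hy : 0 < y) :
    ∃! ρ : ℝ, 0 < ρ ∧ ρ < 1 ∧ (1 + x / ρ) ^ ρ = 1 + x / (1 + y) := by
  have hrhs : 1 < 1 + x / (1 + y) := lt_add_of_pos_right 1 (by positivity)
  have hrhs_lt : log (1 + x / (1 + y)) < log (1 + x) := by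
    gcongr
    exact div_lt_self hx (by linarith)
  have hequation : ∀ ρ, 0 < ρ → ((1 + x / ρ) ^ ρ = 1 + x / (1 + y) ↔
      ρ * log (1 + x / ρ) = log (1 + x / (1 + y))) := fun ρ hρ ↦
    (mul_log_eq_log_iff (by positivity) (by linarith)).symm
  obtain ⟨ρ, ⟨hρ₀, hρ₁⟩, hρ⟩ :=
    exists_mem_Ioo_mul_log_one_add_div_eq hx (log_pos hrhs) hrhs_lt
  refine ⟨ρ, ⟨hρ₀, hρ₁, (hequation ρ hρ₀).2 hρ⟩, ?_⟩
  rintro σ ⟨hσ₀, -, hσ⟩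
  exact (strictMonoOn_mul_log_one_add_div hx).injOn hσ₀ hρ₀
    (((hequation σ hσ₀).1 hσ).trans hρ.symm)
end

section
/- Let s₁, s₂, α, β > 0 be real numbers. For i = 1, 2 let ρᵢ ∈ (0, 1) be the unique solutions of (1 + s₁/ρ₁)^{ρ₁} = 1 + s₁/(1 + α·s₂) and (1 + s₂/ρ₂)^{ρ₂} = 1 + s₂/(1 + β·s₁). If ρ₁ + ρ₂ ≤ 1, then the FDM bandwidth split assigning fraction ρ₁ to user 1 and fraction 1 − ρ₁ to user 2 gives each user at least its competitive rate: ρ₁ · log₂(1 + s₁/ρ₁) ≥ log₂(1 + s₁/(1 + α·s₂)) and (1 − ρ₁) · log₂(1 + s₂/(1 − ρ₁)) ≥ log₂(1 + s₂/(1 + β·s₁)). -/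
private lemma rho_log_mono (s : ℝ) (hs : 0 < s) {a b : ℝ} (ha : 0 < a) (hab : a ≤ b) :
    a * Real.log (1 + s / a) ≤ b * Real.log (1 + s / b) := by
  have hb : 0 < b := lt_of_lt_of_le ha hab
  have hl0 : 0 ≤ a / b := by positivity
  have hl1 : a / b ≤ 1 := (div_le_one hb).2 hab
  have h1 : (1 : ℝ) ∈ Set.Ioi (0:ℝ) := by norm_num
  have h2 : (1 + s / a) ∈ Set.Ioi (0:ℝ) := by
    simp only [Set.mem_Ioi]; positivity
  have key := (strictConcaveOn_log_Ioi.concaveOn).2 h1 h2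
      (by linarith : (0:ℝ) ≤ 1 - a / b) hl0 (by ring)
  have harg : (1 - a / b) * 1 + (a / b) * (1 + s / a) = 1 + s / b := by
    field_simp
    ring
  simp only [smul_eq_mul] at key
  rw [harg, Real.log_one, mul_zero, zero_add] at key
  have := mul_le_mul_of_nonneg_left key (le_of_lt hb)
  calc a * Real.log (1 + s / a) = b * (a / b * Real.log (1 + s / a)) := by
        field_simp
    _ ≤ b * Real.log (1 + s / b) := this

/-- Claim 2: if the bandwidth fractions `ρ₁, ρ₂ ∈ (0,1)` at which each user
matches its competitive rate satisfy `ρ₁ + ρ₂ ≤ 1`, then the FDM split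
`(ρ₁, 1 - ρ₁)` gives each user at least its competitive rate. -/
theorem fdm_dominates_competitive
    (s₁ s₂ α β : ℝ) (hs₁ : 0 < s₁) (hs₂ : 0 < s₂) (hα : 0 < α) (hβ : 0 < β)
    (ρ₁ ρ₂ : ℝ) (hρ₁ : ρ₁ ∈ Set.Ioo (0 : ℝ) 1) (hρ₂ : ρ₂ ∈ Set.Ioo (0 : ℝ) 1)
    (heq₁ : (1 + s₁ / ρ₁) ^ ρ₁ = 1 + s₁ / (1 + α * s₂))
    (heq₂ : (1 + s₂ / ρ₂) ^ ρ₂ = 1 + s₂ / (1 + β * s₁))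
    (hsum : ρ₁ + ρ₂ ≤ 1) :
    Real.logb 2 (1 + s₁ / (1 + α * s₂)) ≤ ρ₁ * Real.logb 2 (1 + s₁ / ρ₁) ∧
      Real.logb 2 (1 + s₂ / (1 + β * s₁)) ≤
        (1 - ρ₁) * Real.logb 2 (1 + s₂ / (1 - ρ₁)) := by
  obtain ⟨h₁0, h₁1⟩ := hρ₁
  obtain ⟨h₂0, h₂1⟩ := hρ₂
  have hx₁ : (0:ℝ) < 1 + s₁ / ρ₁ := by positivity
  have hx₂ : (0:ℝ) < 1 + s₂ / ρ₂ := by positivity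
  have hlog2 : (0:ℝ) < Real.log 2 := Real.log_pos (by norm_num)
  constructor
  · rw [← heq₁, Real.logb, Real.logb, Real.log_rpow hx₁]
    rw [mul_div_assoc]
  · have hmono := rho_log_mono s₂ hs₂ h₂0 (by linarith : ρ₂ ≤ 1 - ρ₁)
    rw [← heq₂, Real.logb, Real.logb, Real.log_rpow hx₂, ← mul_div_assoc]
    gcongr
end

section
/- Fix a real x > 0. For y > 0 let ρ(y) ∈ (0, 1) denote the unique solution of (1 + x/ρ)^ρ = 1 + x/(1 + y). Then ρ(y) tends to 0 as y tends to infinity; that is, for every ε with 0 < ε < 1 there exists Y such that for all y > Y, ρ(y) < ε. -/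
open Filter Topology

/- If `ρ(y) ≥ ε`, the left-hand side is at least `(1 + x)^ε > 1`, whereas the right-hand side
`1 + x/(1 + y)` tends to `1`. -/

theorem one_add_rpow_le_one_add_div_rpow {x ε ρ : ℝ} (hx : 0 ≤ x) (hερ : ε ≤ ρ) (hρ0 : 0 < ρ)
    (hρ1 : ρ ≤ 1) : (1 + x) ^ ε ≤ (1 + x / ρ) ^ ρ :=
  calc (1 + x) ^ ε ≤ (1 + x) ^ ρ := Real.rpow_le_rpow_of_exponent_le (by linarith) hερ
    _ ≤ (1 + x / ρ) ^ ρ := by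
      gcongr
      exact le_div_self hx hρ0 hρ1

theorem tendsto_one_add_div_one_add_atTop (x : ℝ) :
    Tendsto (fun y : ℝ => 1 + x / (1 + y)) atTop (𝓝 1) := by
  simpa using (tendsto_const_nhds (x := (1 : ℝ))).add
    (tendsto_const_nhds.div_atTop (tendsto_atTop_add_const_left atTop 1 tendsto_id))

/-- Claim 4: for fixed `x > 0`, the unique solution `ρ(y) ∈ (0,1)` of
`(1 + x/ρ)^ρ = 1 + x/(1+y)` tends to `0` as `y → ∞`. -/
theorem rho_tendsto_zero (x : ℝ) (hx : 0 < x) (ρ : ℝ → ℝ)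
    (hρ : ∀ y : ℝ, 0 < y →
      ρ y ∈ Set.Ioo (0 : ℝ) 1 ∧ (1 + x / ρ y) ^ ρ y = 1 + x / (1 + y)) :
    ∀ ε : ℝ, 0 < ε → ε < 1 → ∃ Y : ℝ, ∀ y : ℝ, Y < y → ρ y < ε := by
  intro ε hε _
  have hlower : 1 < (1 + x) ^ ε := Real.one_lt_rpow (by linarith) hε
  obtain ⟨Y, hY⟩ := eventually_atTop.1 <|
    ((tendsto_one_add_div_one_add_atTop x).eventually (gt_mem_nhds hlower)).and
      (eventually_gt_atTop 0)
  refine ⟨Y, fun y hy => ?_⟩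
  obtain ⟨hclose, hy0⟩ := hY y hy.le
  obtain ⟨⟨hρ0, hρ1⟩, heq⟩ := hρ y hy0
  by_contra! hερ
  have := one_add_rpow_le_one_add_div_rpow hx.le hερ hρ0 hρ1.le
  linarith
end

section
/- Let s₁, s₂ > 0 and let c₁, c₂ ≥ 0 be real numbers. Define R₁(ρ) = ρ·log₂(1 + s₁/ρ) and R₂(ρ) = ρ·log₂(1 + s₂/ρ) for ρ ∈ (0,1), and F(ρ) = (R₁(ρ) − c₁)·(R₂(1 − ρ) − c₂). Suppose there exists ρ₀ ∈ (0, 1) with c₁ < R₁(ρ₀) and c₂ < R₂(1 − ρ₀). Then the set A = {ρ ∈ (0,1) : c₁ < R₁(ρ) and c₂ < R₂(1 − ρ)} is a nonempty open subinterval of (0,1), F is positive on A, and F attains its maximum over A at exactly one point ρ* ∈ A. -/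
/-!
Put `f ρ = R₁ ρ - c₁` and `g ρ = R₂ (1 - ρ) - c₂`. Since `ρ ↦ ρ log(1 + s/ρ)` is increasing,
`f` increases and `g` decreases, so `A = {f > 0} ∩ {g > 0}` is open and order-connected, i.e. an
open interval. At a point of `[0, 1]` where `F = f g > 0` both factors are positive (one of them
already is, by monotonicity from `ρ₀`), and `F ≤ 0` at `0` and `1`; so the maximum of `F` over
the compact `[0, 1]`, which is at least `F ρ₀ > 0`, is attained in `A`. It is unique because
`log F = log f + log g` is strictly concave on `A`: the second derivative of `ρ log(1 + s/ρ)` is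
`-s² / (ρ (ρ + s)²) < 0`.
-/

open Real Set Filter Topology

/-- At `ρ = 0` the junk value `s / 0 = 0` gives `0`, the continuous extension. -/
noncomputable def bandRate (b s ρ : ℝ) : ℝ := ρ * logb b (1 + s / ρ)

section BandRate

variable {b s ρ : ℝ}

@[simp]
theorem bandRate_zero : bandRate b s 0 = 0 := by simp [bandRate]

theorem bandRate_eq_div_log (hs : 0 ≤ s) (hρ : 0 ≤ ρ) :
    bandRate b s ρ = (ρ * log (ρ + s) - ρ * log ρ) / log b := by
  rcases hρ.eq_or_lt with rfl | hρ
  · simp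
  · rw [bandRate, logb, show 1 + s / ρ = (ρ + s) / ρ by field_simp,
      log_div (by positivity) hρ.ne']
    ring

theorem continuousOn_bandRate (hs : 0 < s) : ContinuousOn (bandRate b s) (Ici 0) := by
  refine ContinuousOn.congr ?_ fun ρ hρ => bandRate_eq_div_log hs.le hρ
  refine ContinuousOn.div_const (ContinuousOn.sub ?_ continuous_mul_log.continuousOn) _
  exact continuousOn_id.mul <| (continuousOn_id.add continuousOn_const).log
    fun ρ (hρ : 0 ≤ ρ) => (add_pos_of_nonneg_of_pos hρ hs).ne'

theorem hasDerivAt_bandRate (hs : 0 ≤ s) (hρ : 0 < ρ) :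
    HasDerivAt (bandRate b s) ((log (ρ + s) - log ρ - s / (ρ + s)) / log b) ρ := by
  have hρs : 0 < ρ + s := by positivity
  have h := (((hasDerivAt_id ρ).mul (((hasDerivAt_id ρ).add_const s).log hρs.ne')).sub
    (hasDerivAt_mul_log hρ.ne')).div_const (log b)
  refine (h.congr_deriv ?_).congr_of_eventuallyEq ?_
  · simp only [id]
    field_simp
    ring
  · filter_upwards [lt_mem_nhds hρ] with x hx using bandRate_eq_div_log hs hx.le

theorem strictMonoOn_bandRate (hb : 1 < b) (hs : 0 < s) : StrictMonoOn (bandRate b s) (Ici 0) := by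
  refine strictMonoOn_of_deriv_pos (convex_Ici 0) (continuousOn_bandRate hs) fun ρ hρ => ?_
  rw [interior_Ici] at hρ
  have hρ : 0 < ρ := hρ
  have hρs : 0 < ρ + s := by positivity
  rw [(hasDerivAt_bandRate hs.le hρ).deriv]
  refine div_pos ?_ (log_pos hb)
  have key := log_lt_sub_one_of_pos (div_pos hρ hρs) (div_lt_one hρs |>.2 (by linarith)).ne
  rw [log_div hρ.ne' hρs.ne', div_sub_one hρs.ne'] at key
  linarith [show (ρ - (ρ + s)) / (ρ + s) = -(s / (ρ + s)) by ring]

theorem strictConcaveOn_bandRate (hb : 1 < b) (hs : 0 < s) :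
    StrictConcaveOn ℝ (Ici 0) (bandRate b s) := by
  refine strictConcaveOn_of_deriv2_neg (convex_Ici 0) (continuousOn_bandRate hs) fun ρ hρ => ?_
  rw [interior_Ici] at hρ
  have hρ : 0 < ρ := hρ
  have hρs : 0 < ρ + s := by positivity
  have hderiv : deriv (bandRate b s) =ᶠ[𝓝 ρ]
      fun x => (log (x + s) - log x - s / (x + s)) / log b := by
    filter_upwards [lt_mem_nhds hρ] with x hx using (hasDerivAt_bandRate hs.le hx).deriv
  have hderiv2 : HasDerivAt (fun x => (log (x + s) - log x - s / (x + s)) / log b)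
      (-(s ^ 2 / (ρ * (ρ + s) ^ 2)) / log b) ρ := by
    refine ((((((hasDerivAt_id ρ).add_const s).log hρs.ne').sub (hasDerivAt_log hρ.ne')).sub
      ((hasDerivAt_const ρ s).div ((hasDerivAt_id ρ).add_const s) hρs.ne')).div_const
      (log b)).congr_deriv ?_
    simp only [id]
    field_simp
    ring
  rw [Function.iterate_succ_apply, Function.iterate_one, hderiv.deriv_eq, hderiv2.deriv]
  exact div_neg_of_neg_of_pos (neg_neg_of_pos (by positivity)) (log_pos hb)

end BandRate

theorem ConcaveOn.comp_const_sub {s : Set ℝ} {h : ℝ → ℝ} (hh : ConcaveOn ℝ s h) (c : ℝ) :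
    ConcaveOn ℝ ((c - ·) ⁻¹' s) fun x => h (c - x) := by
  have hmap : ⇑(AffineMap.lineMap c (c - 1) : ℝ →ᵃ[ℝ] ℝ) = (c - ·) := by
    ext x
    simp [AffineMap.lineMap_apply]
    ring
  have h' := hh.comp_affineMap (AffineMap.lineMap c (c - 1))
  rw [hmap] at h'
  exact h'

theorem IsOpen.eq_Ioo_csInf_csSup {α : Type*} [ConditionallyCompleteLinearOrder α]
    [TopologicalSpace α] [OrderTopology α] [DenselyOrdered α] [NoMinOrder α] [NoMaxOrder α]
    {s : Set α} (ho : IsOpen s) (hc : s.OrdConnected) (hne : s.Nonempty) (hb : BddBelow s)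
    (ha : BddAbove s) :
    s = Ioo (sInf s) (sSup s) := by
  refine Subset.antisymm (fun x hx => ⟨?_, ?_⟩) fun z ⟨hz₁, hz₂⟩ => ?_
  · obtain ⟨l, hl, hls⟩ := exists_Ioc_subset_of_mem_nhds (ho.mem_nhds hx) (exists_lt x)
    obtain ⟨y, hly, hyx⟩ := exists_between hl
    exact (csInf_le hb (hls ⟨hly, hyx.le⟩)).trans_lt hyx
  · obtain ⟨u, hu, hsu⟩ := exists_Ico_subset_of_mem_nhds (ho.mem_nhds hx) (exists_gt x)
    obtain ⟨y, hxy, hyu⟩ := exists_between hu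
    exact hxy.trans_le (le_csSup ha (hsu ⟨hxy.le, hyu⟩))
  · obtain ⟨x, hx, hxz⟩ := exists_lt_of_csInf_lt hne hz₁
    obtain ⟨y, hy, hzy⟩ := exists_lt_of_lt_csSup hne hz₂
    exact hc.out hx hy ⟨hxz.le, hzy.le⟩

section LogConcave

variable {E : Type*} [AddCommGroup E] [Module ℝ E] {s : Set E} {f g : E → ℝ}

theorem ConcaveOn.log (hf : ConcaveOn ℝ s f) (hpos : ∀ x ∈ s, 0 < f x) :
    ConcaveOn ℝ s fun x => Real.log (f x) :=
  ⟨hf.1, fun x hx y hy _ _ ha hb hab =>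
    (strictConcaveOn_log_Ioi.concaveOn.2 (hpos x hx) (hpos y hy) ha hb hab).trans <|
      log_le_log (convex_Ioi (0 : ℝ) (hpos x hx) (hpos y hy) ha hb hab) (hf.2 hx hy ha hb hab)⟩

theorem StrictConcaveOn.log (hf : StrictConcaveOn ℝ s f) (hpos : ∀ x ∈ s, 0 < f x) :
    StrictConcaveOn ℝ s fun x => Real.log (f x) :=
  ⟨hf.1, fun x hx y hy hxy _ _ ha hb hab =>
    (strictConcaveOn_log_Ioi.concaveOn.2 (hpos x hx) (hpos y hy) ha.le hb.le hab).trans_lt <|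
      log_lt_log (convex_Ioi (0 : ℝ) (hpos x hx) (hpos y hy) ha.le hb.le hab)
        (hf.2 hx hy hxy ha hb hab)⟩

theorem StrictConcaveOn.eq_of_isMaxOn_mul (hf : StrictConcaveOn ℝ s f) (hg : ConcaveOn ℝ s g)
    (hf₀ : ∀ x ∈ s, 0 < f x) (hg₀ : ∀ x ∈ s, 0 < g x) {x y : E}
    (hfgx : IsMaxOn (f * g) s x) (hfgy : IsMaxOn (f * g) s y) (hx : x ∈ s) (hy : y ∈ s) :
    x = y := by
  have hlog : StrictConcaveOn ℝ s fun z => Real.log ((f * g) z) :=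
    ((hf.log hf₀).add_concaveOn (hg.log hg₀)).congr fun z hz =>
      (log_mul (hf₀ z hz).ne' (hg₀ z hz).ne').symm
  have hlog_max {w : E} (hfgw : IsMaxOn (f * g) s w) :
      IsMaxOn (fun z => Real.log ((f * g) z)) s w := fun z hz =>
    log_le_log (mul_pos (hf₀ z hz) (hg₀ z hz)) (hfgw hz)
  exact hlog.eq_of_isMaxOn (hlog_max hfgx) (hlog_max hfgy) hx hy

end LogConcave

def bargainingSet (f g : ℝ → ℝ) (a b : ℝ) : Set ℝ := {x ∈ Ioo a b | 0 < f x ∧ 0 < g x}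

section BargainingSet

variable {f g : ℝ → ℝ} {a b x₀ : ℝ}

theorem isOpen_bargainingSet (hf : ContinuousOn f (Ioo a b)) (hg : ContinuousOn g (Ioo a b)) :
    IsOpen (bargainingSet f g a b) := by
  have h : bargainingSet f g a b = (Ioo a b ∩ f ⁻¹' Ioi 0) ∩ (Ioo a b ∩ g ⁻¹' Ioi 0) := by
    ext x
    simp only [bargainingSet, mem_sep_iff, mem_inter_iff, mem_preimage, mem_Ioi]
    tauto
  rw [h]
  exact (hf.isOpen_inter_preimage isOpen_Ioo isOpen_Ioi).inter
    (hg.isOpen_inter_preimage isOpen_Ioo isOpen_Ioi)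

theorem ordConnected_bargainingSet (hf : MonotoneOn f (Ioo a b)) (hg : AntitoneOn g (Ioo a b)) :
    (bargainingSet f g a b).OrdConnected := by
  refine ⟨fun x ⟨hx, hfx, _⟩ y ⟨hy, _, hgy⟩ z ⟨hxz, hzy⟩ => ?_⟩
  have hz : z ∈ Ioo a b := ⟨hx.1.trans_le hxz, hzy.trans_lt hy.2⟩
  exact ⟨hz, hfx.trans_le (hf hx hz hxz), hgy.trans_le (hg hz hy hzy)⟩

theorem exists_bargainingSet_eq_Ioo (hf : ContinuousOn f (Ioo a b))
    (hg : ContinuousOn g (Ioo a b)) (hf' : MonotoneOn f (Ioo a b)) (hg' : AntitoneOn g (Ioo a b))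
    (hx₀ : x₀ ∈ bargainingSet f g a b) :
    ∃ p q, a ≤ p ∧ p < q ∧ q ≤ b ∧ bargainingSet f g a b = Ioo p q := by
  have hne : (bargainingSet f g a b).Nonempty := ⟨x₀, hx₀⟩
  have hlow : ∀ x ∈ bargainingSet f g a b, a ≤ x := fun x hx => hx.1.1.le
  have hup : ∀ x ∈ bargainingSet f g a b, x ≤ b := fun x hx => hx.1.2.le
  have hIoo := (isOpen_bargainingSet hf hg).eq_Ioo_csInf_csSup
    (ordConnected_bargainingSet hf' hg') hne ⟨a, hlow⟩ ⟨b, hup⟩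
  have hx₀' : x₀ ∈ Ioo _ _ := hIoo ▸ hx₀
  exact ⟨_, _, le_csInf hne hlow, hx₀'.1.trans hx₀'.2, csSup_le hne hup, hIoo⟩

theorem mem_bargainingSet_of_mul_pos (hf : MonotoneOn f (Icc a b)) (hg : AntitoneOn g (Icc a b))
    (ha : f a ≤ 0) (hb : g b ≤ 0) (hx₀ : x₀ ∈ bargainingSet f g a b) {x : ℝ} (hx : x ∈ Icc a b)
    (hfg : 0 < f x * g x) : x ∈ bargainingSet f g a b := by
  have hx₀' : x₀ ∈ Icc a b := Ioo_subset_Icc_self hx₀.1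
  have hpos : 0 < f x ∧ 0 < g x := by
    rcases le_total x x₀ with hxx₀ | hx₀x
    · have hgx : 0 < g x := hx₀.2.2.trans_le (hg hx hx₀' hxx₀)
      exact ⟨pos_of_mul_pos_left hfg hgx.le, hgx⟩
    · have hfx : 0 < f x := hx₀.2.1.trans_le (hf hx₀' hx hx₀x)
      exact ⟨hfx, pos_of_mul_pos_right hfg hfx.le⟩
  refine ⟨⟨hx.1.lt_of_ne ?_, hx.2.lt_of_ne ?_⟩, hpos⟩
  · rintro rfl
    exact ha.not_gt hpos.1
  · rintro rfl
    exact hb.not_gt hpos.2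

theorem existsUnique_isMaxOn_mul_bargainingSet (hf : ContinuousOn f (Icc a b))
    (hg : ContinuousOn g (Icc a b)) (hf' : MonotoneOn f (Icc a b)) (hg' : AntitoneOn g (Icc a b))
    (hfc : StrictConcaveOn ℝ (Icc a b) f) (hgc : ConcaveOn ℝ (Icc a b) g)
    (ha : f a ≤ 0) (hb : g b ≤ 0) (hx₀ : x₀ ∈ bargainingSet f g a b) :
    ∃! x, x ∈ bargainingSet f g a b ∧ IsMaxOn (f * g) (bargainingSet f g a b) x := by
  have hsub : bargainingSet f g a b ⊆ Icc a b := fun _ hx => Ioo_subset_Icc_self hx.1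
  obtain ⟨x, hx, hmax⟩ := isCompact_Icc.exists_isMaxOn ⟨x₀, hsub hx₀⟩ (hf.mul hg)
  have hfgx : 0 < f x * g x := (mul_pos hx₀.2.1 hx₀.2.2).trans_le (hmax (hsub hx₀))
  refine ⟨x, ⟨mem_bargainingSet_of_mul_pos hf' hg' ha hb hx₀ hx hfgx, hmax.on_subset hsub⟩,
    fun y ⟨hy, hymax⟩ => ?_⟩
  have hconvex : Convex ℝ (bargainingSet f g a b) :=
    (ordConnected_bargainingSet (hf'.mono Ioo_subset_Icc_self)
      (hg'.mono Ioo_subset_Icc_self)).convex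
  exact (hfc.subset hsub hconvex).eq_of_isMaxOn_mul (hgc.subset hsub hconvex)
    (fun z hz => hz.2.1) (fun z hz => hz.2.2) hymax (hmax.on_subset hsub) hy
    (mem_bargainingSet_of_mul_pos hf' hg' ha hb hx₀ hx hfgx)

end BargainingSet

/-- FDM instance of Theorem 1: with `R₁(ρ) = ρ log₂(1 + s₁/ρ)`,
`R₂(ρ) = ρ log₂(1 + s₂/ρ)` and Nash product
`F(ρ) = (R₁(ρ) - c₁)(R₂(1-ρ) - c₂)`, if some `ρ₀ ∈ (0,1)` strictly dominates
the disagreement rates, then `A = {ρ ∈ (0,1) : c₁ < R₁ ρ ∧ c₂ < R₂ (1-ρ)}` is a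
nonempty open subinterval of `(0,1)`, `F > 0` on `A`, and `F` attains its
maximum over `A` at exactly one point of `A`. -/
theorem fdm_nash_bargaining_exists_unique
    (s₁ s₂ c₁ c₂ : ℝ) (hs₁ : 0 < s₁) (hs₂ : 0 < s₂) (hc₁ : 0 ≤ c₁) (hc₂ : 0 ≤ c₂)
    (R₁ R₂ F : ℝ → ℝ)
    (hR₁ : ∀ ρ, R₁ ρ = ρ * Real.logb 2 (1 + s₁ / ρ))
    (hR₂ : ∀ ρ, R₂ ρ = ρ * Real.logb 2 (1 + s₂ / ρ))
    (hF : ∀ ρ, F ρ = (R₁ ρ - c₁) * (R₂ (1 - ρ) - c₂))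
    (A : Set ℝ)
    (hA : A = {ρ ∈ Set.Ioo (0 : ℝ) 1 | c₁ < R₁ ρ ∧ c₂ < R₂ (1 - ρ)})
    (ρ₀ : ℝ) (hρ₀ : ρ₀ ∈ Set.Ioo (0 : ℝ) 1)
    (hρ₀₁ : c₁ < R₁ ρ₀) (hρ₀₂ : c₂ < R₂ (1 - ρ₀)) :
    (∃ a b : ℝ, 0 ≤ a ∧ a < b ∧ b ≤ 1 ∧ A = Set.Ioo a b) ∧
    (∀ ρ ∈ A, 0 < F ρ) ∧
    (∃! ρstar : ℝ, ρstar ∈ A ∧ ∀ ρ ∈ A, F ρ ≤ F ρstar) := by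
  obtain rfl : R₁ = bandRate 2 s₁ := funext hR₁
  obtain rfl : R₂ = bandRate 2 s₂ := funext hR₂
  set f : ℝ → ℝ := fun ρ => bandRate 2 s₁ ρ - c₁
  set g : ℝ → ℝ := fun ρ => bandRate 2 s₂ (1 - ρ) - c₂
  obtain rfl : F = f * g := funext hF
  obtain rfl : A = bargainingSet f g 0 1 := by
    rw [hA]; ext; simp only [bargainingSet, f, g, sub_pos]
  have hρ₀A : ρ₀ ∈ bargainingSet f g 0 1 := ⟨hρ₀, sub_pos.2 hρ₀₁, sub_pos.2 hρ₀₂⟩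
  have hfc : ContinuousOn f (Icc 0 1) :=
    ((continuousOn_bandRate hs₁).mono fun x hx => hx.1).sub continuousOn_const
  have hgc : ContinuousOn g (Icc 0 1) :=
    ((continuousOn_bandRate hs₂).comp (continuousOn_const.sub continuousOn_id)
      fun x hx => sub_nonneg.2 hx.2).sub continuousOn_const
  have hfm : MonotoneOn f (Icc 0 1) := fun x hx y hy hxy =>
    sub_le_sub_right ((strictMonoOn_bandRate one_lt_two hs₁).monotoneOn hx.1 hy.1 hxy) c₁
  have hgm : AntitoneOn g (Icc 0 1) := fun x hx y hy hxy =>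
    sub_le_sub_right ((strictMonoOn_bandRate one_lt_two hs₂).monotoneOn
      (sub_nonneg.2 hy.2) (sub_nonneg.2 hx.2) (sub_le_sub_left hxy 1)) c₂
  have hfconc : StrictConcaveOn ℝ (Icc 0 1) f :=
    ((strictConcaveOn_bandRate one_lt_two hs₁).add_const (-c₁)).subset (fun x hx => hx.1)
      (convex_Icc 0 1)
  have hgconc : ConcaveOn ℝ (Icc 0 1) g :=
    (((strictConcaveOn_bandRate one_lt_two hs₂).concaveOn.comp_const_sub 1).add_const
      (-c₂)).subset (fun x hx => sub_nonneg.2 hx.2) (convex_Icc 0 1)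
  refine ⟨exists_bargainingSet_eq_Ioo (hfc.mono Ioo_subset_Icc_self)
    (hgc.mono Ioo_subset_Icc_self) (hfm.mono Ioo_subset_Icc_self) (hgm.mono Ioo_subset_Icc_self)
    hρ₀A, fun ρ hρ => mul_pos hρ.2.1 hρ.2.2, ?_⟩
  simpa only [isMaxOn_iff] using existsUnique_isMaxOn_mul_bargainingSet hfc hgc hfm hgm
    hfconc hgconc (by simp [f, hc₁]) (by simp [g, hc₂]) hρ₀A
end
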